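/- Let s and t be positive integers with t ≥ 2, and let G be a connected graph that is P_t-free and SDK_s-free. If G admits a proper coloring with 3 colors, then G has a dominating set of size at most (1 + R(4, R(4, s)))^(t-2). -/

import Mathlib

open SimpleGraph

/-- The Ramsey number `R(k, l)`: the least `N` such that every finite simple graph with at
least `N` vertices contains a clique with `k` vertices or an independent set with `l`
vertices (an independent set of size `l` is a clique of size `l` in the complement). -/
noncomputable def ramseyNumber (k l : ℕ) : ℕ :=
  sInf {N | ∀ (V : Type) [Fintype V] (G : SimpleGraph V),
    N ≤ Fintype.card V →
      (∃ S : Finset V, G.IsNClique k S) ∨ (∃ S : Finset V, Gᶜ.IsNClique l S)}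

/-- The one-subdivision of `K_{1,s}`: a center `Sum.inl ()`, middle vertices
`Sum.inr (Sum.inl i)` and leaves `Sum.inr (Sum.inr i)`; the center is adjacent to every
middle vertex, and the `i`-th middle vertex is adjacent to the `i`-th leaf. -/
def SDK (s : ℕ) : SimpleGraph (Unit ⊕ Fin s ⊕ Fin s) :=
  SimpleGraph.fromRel (fun a b =>
    (∃ i : Fin s, a = Sum.inl () ∧ b = Sum.inr (Sum.inl i)) ∨
    (∃ i : Fin s, a = Sum.inr (Sum.inl i) ∧ b = Sum.inr (Sum.inr i)))

/-- `G` is `H`-free: no induced subgraph of `G` is isomorphic to `H`. -/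
def IsFree {W V : Type*} (H : SimpleGraph W) (G : SimpleGraph V) : Prop :=
  ¬ Nonempty (H ↪g G)

/-- `nbhd G S` is the set of all vertices having a neighbour in `S`. -/
def nbhd {V : Type*} (G : SimpleGraph V) (S : Set V) : Set V :=
  {v | ∃ s ∈ S, G.Adj s v}

/-!
Fix a vertex `v`. For every vertex `u`, a minimal subset `X` of `N(u)` dominating the
vertices at distance two from `u` gives each `x ∈ X` a private neighbour `w x` at distance two.
A 3-colourable graph has no `K₄`, so Ramsey's theorem applied twice yields `s` pairwise
non-adjacent `x ∈ X` whose private neighbours are pairwise non-adjacent too; together with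
`u` they induce `SDK_s`. Hence `|X| < R(4, R(4, s))`. Adding such a set for every vertex of the
current dominating set extends domination of the ball of radius `n + 1` around `v` to radius
`n + 2`, multiplying the size by at most `1 + R(4, R(4, s))`. Finally a shortest path in a
`P_t`-free graph has fewer than `t - 1` edges, so radius `t - 1` covers the whole graph.
-/

open Finset

def IsRamseyBound (k l N : ℕ) : Prop :=
  ∀ (V : Type) [Fintype V] (G : SimpleGraph V),
    N ≤ Fintype.card V →
      (∃ S : Finset V, G.IsNClique k S) ∨ (∃ S : Finset V, Gᶜ.IsNClique l S)

lemma SimpleGraph.compl_induce {V : Type*} (G : SimpleGraph V) (s : Set V) :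
    (G.induce s)ᶜ = Gᶜ.induce s := by
  ext a b
  simp [Subtype.ext_iff]

section Ramsey

variable {k l N : ℕ}

lemma IsRamseyBound.symm (h : IsRamseyBound k l N) : IsRamseyBound l k N := by
  intro V _ G hN
  simpa only [compl_compl, or_comm] using h V Gᶜ hN

lemma IsRamseyBound.exists_subset (h : IsRamseyBound k l N) {V : Type} (G : SimpleGraph V)
    (X : Finset V) (hX : N ≤ #X) :
    (∃ S ⊆ X, G.IsNClique k S) ∨ ∃ S ⊆ X, Gᶜ.IsNClique l S := by
  have := h _ (G.induce (X : Set V)) (by simpa using hX)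
  rw [G.compl_induce] at this
  refine this.imp ?_ ?_ <;> rintro ⟨S, hS⟩ <;>
    exact ⟨S.map (.subtype _), by exact_mod_cast map_subtype_subset S,
      (isNClique_induce_iff _ _ _).mp hS⟩

lemma IsRamseyBound.exists_insert_of_le_degree (h : IsRamseyBound k (l + 1) N) {V : Type}
    [Fintype V] (G : SimpleGraph V) [DecidableRel G.Adj] (v : V) (hv : N ≤ G.degree v) :
    (∃ S : Finset V, G.IsNClique (k + 1) S) ∨ ∃ S : Finset V, Gᶜ.IsNClique (l + 1) S := by
  classical
  rcases h.exists_subset G (G.neighborFinset v) hv with ⟨S, hSv, hS⟩ | ⟨S, -, hS⟩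
  · exact Or.inl ⟨insert v S, hS.insert fun b hb => (G.mem_neighborFinset v b).mp (hSv hb)⟩
  · exact Or.inr ⟨S, hS⟩

lemma IsRamseyBound.succ {N₁ N₂ : ℕ} (h₁ : IsRamseyBound k (l + 1) N₁)
    (h₂ : IsRamseyBound (k + 1) l N₂) : IsRamseyBound (k + 1) (l + 1) (N₁ + N₂ + 1) := by
  classical
  intro V _ G hN
  obtain ⟨v⟩ : Nonempty V := Fintype.card_pos_iff.mp (by omega)
  by_cases hv : N₁ ≤ G.degree v
  · exact h₁.exists_insert_of_le_degree G v hv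
  · have hv' : N₂ ≤ Gᶜ.degree v := by rw [G.degree_compl v]; omega
    simpa only [compl_compl, or_comm] using h₂.symm.exists_insert_of_le_degree Gᶜ v hv'

lemma exists_isRamseyBound : ∀ k l : ℕ, ∃ N, IsRamseyBound k l N
  | 0, _ => ⟨0, fun _ _ _ _ => Or.inl ⟨∅, by simp⟩⟩
  | _ + 1, 0 => ⟨0, fun _ _ _ _ => Or.inr ⟨∅, by simp⟩⟩
  | k + 1, l + 1 =>
    have ⟨_, h₁⟩ := exists_isRamseyBound k (l + 1)
    have ⟨_, h₂⟩ := exists_isRamseyBound (k + 1) l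
    ⟨_, h₁.succ h₂⟩

lemma isRamseyBound_ramseyNumber (k l : ℕ) : IsRamseyBound k l (ramseyNumber k l) :=
  Nat.sInf_mem (exists_isRamseyBound k l)

lemma SimpleGraph.CliqueFree.exists_isNIndepSet {V : Type} {G : SimpleGraph V}
    (hG : G.CliqueFree k) (X : Finset V) (hX : ramseyNumber k l ≤ #X) :
    ∃ S ⊆ X, G.IsNIndepSet l S := by
  rcases (isRamseyBound_ramseyNumber k l).exists_subset G X hX with
    ⟨S, -, hS⟩ | ⟨S, hSX, hS⟩
  · exact (hG S hS).elim
  · exact ⟨S, hSX, by simpa using hS⟩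

end Ramsey

namespace SimpleGraph

section

variable {V : Type*} {G : SimpleGraph V}

lemma nonempty_sdk_embedding {s : ℕ} (u : V) (g w : Fin s → V) (hug : ∀ i, G.Adj u (g i))
    (huw : ∀ i, ¬ G.Adj u (w i)) (hwu : ∀ i, w i ≠ u) (hgg : ∀ i j, ¬ G.Adj (g i) (g j))
    (hgw : ∀ i j, G.Adj (g i) (w j) ↔ i = j) (hww : ∀ i j, ¬ G.Adj (w i) (w j)) :
    Nonempty (SDK s ↪g G) := by
  have hgw_self i : G.Adj (g i) (w i) := (hgw i i).mpr rfl
  let φ : Unit ⊕ Fin s ⊕ Fin s → V := Sum.elim (fun _ => u) (Sum.elim g w)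
  have hφ : Function.Injective φ := by
    rintro (⟨⟩ | i | i) (⟨⟩ | j | j) h <;> simp only [φ, Sum.elim_inl, Sum.elim_inr] at h
    · rfl
    · exact absurd h (hug j).ne
    · exact absurd h.symm (hwu j)
    · exact absurd h.symm (hug i).ne
    · rw [← (hgw j i).mp (h ▸ hgw_self i)]
    · exact absurd (h ▸ hug i) (huw j)
    · exact absurd h (hwu i)
    · exact absurd (h ▸ hug j) (huw i)
    · rw [(hgw i j).mp (h ▸ hgw_self i)]
  refine ⟨{ toFun := φ, inj' := hφ, map_rel_iff' := ?_ }⟩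
  rintro (⟨⟩ | i | i) (⟨⟩ | j | j) <;>
    simp [φ, SDK, hug, huw, hgg, hgw, hww, (hug _).symm, fun i => mt G.adj_symm (huw i),
      G.adj_comm (w _) (g _), eq_comm]

lemma dist_eq_two_iff {u v : V} :
    G.dist u v = 2 ↔ u ≠ v ∧ ¬ G.Adj u v ∧ (G.commonNeighbors u v).Nonempty := by
  rw [dist, ENat.toNat_eq_iff two_ne_zero, Nat.cast_ofNat, edist_eq_two_iff]

lemma Walk.dist_getVert_of_length_eq_dist {u v : V} (p : G.Walk u v)
    (hp : p.length = G.dist u v) {n : ℕ} (hn : n ≤ p.length) : G.dist u (p.getVert n) = n := by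
  rw [← length_eq_dist_of_subwalk hp (p.isSubwalk_take n), take_length, min_eq_left hn]

lemma exists_adj_dist_eq_of_dist_eq_succ {u w : V} {m : ℕ} (h : G.dist u w = m + 1) :
    ∃ w', G.Adj w' w ∧ G.dist u w' = m := by
  have huw : G.Reachable u w := Reachable.of_dist_ne_zero (by omega)
  obtain ⟨p, hp⟩ := huw.exists_walk_length_eq_dist
  refine ⟨p.getVert m, ?_, p.dist_getVert_of_length_eq_dist hp (by omega)⟩
  simpa [show m + 1 = p.length by omega] using p.adj_getVert_succ (by omega : m < p.length)

lemma Walk.nonempty_pathGraph_embedding {u v : V} (p : G.Walk u v) (hp : p.length = G.dist u v)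
    {t : ℕ} (ht : t ≤ p.length + 1) : Nonempty (pathGraph t ↪g G) := by
  have hdist (i : Fin t) : G.dist u (p.getVert i) = i :=
    p.dist_getVert_of_length_eq_dist hp (by omega)
  have hinj : Function.Injective fun i : Fin t => p.getVert i := fun i j hij =>
    Fin.ext <| by simpa only [hdist] using congrArg (G.dist u) hij
  refine ⟨{ toFun := fun i => p.getVert i, inj' := hinj, map_rel_iff' := ?_ }⟩
  intro i j
  simp only [Function.Embedding.coeFn_mk, pathGraph_adj]
  constructor
  · intro hadj
    have := hadj.diff_dist_adj (u := u)
    have hij : (i : ℕ) ≠ j := fun h => hadj.ne (by rw [h])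
    rw [hdist, hdist] at this
    omega
  · rintro (h | h)
    · simpa [h] using p.adj_getVert_succ (i := i) (by omega)
    · simpa [h] using (p.adj_getVert_succ (i := j) (by omega)).symm

lemma Reachable.dist_add_two_le_of_isFree_pathGraph {t : ℕ} {u v : V} (huv : G.Reachable u v)
    (hP : IsFree (pathGraph t) G) : G.dist u v + 2 ≤ t := by
  by_contra! h
  obtain ⟨p, hp⟩ := huv.exists_walk_length_eq_dist
  exact hP (p.nonempty_pathGraph_embedding hp (by omega))

end

section PrivateNeighbors

variable {V : Type} {G : SimpleGraph V}

lemma card_lt_of_forall_privateNeighbor [DecidableEq V] {s : ℕ} (hK4 : G.CliqueFree 4)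
    (hSDK : IsFree (SDK s) G) {u : V} {X : Finset V} (hXu : ∀ x ∈ X, G.Adj u x) (w : V → V)
    (hwu : ∀ x ∈ X, w x ≠ u ∧ ¬ G.Adj u (w x))
    (hwX : ∀ x ∈ X, ∀ y ∈ X, G.Adj y (w x) ↔ y = x) :
    #X < ramseyNumber 4 (ramseyNumber 4 s) := by
  by_contra! hX
  have hw_inj : Set.InjOn w X := fun x hx y hy hxy =>
    (hwX y hy x hx).mp (hxy ▸ (hwX x hx x hx).mpr rfl)
  obtain ⟨T, hTX, hT⟩ := hK4.exists_isNIndepSet X hX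
  obtain ⟨J, hJT, hJ⟩ := hK4.exists_isNIndepSet (T.image w)
    (by rw [card_image_of_injOn (hw_inj.mono hTX), hT.card_eq])
  obtain ⟨T', hT'T, rfl⟩ := subset_image_iff.mp hJT
  have hT'card : #T' = s := by
    rw [← card_image_of_injOn (hw_inj.mono (hT'T.trans hTX)), hJ.card_eq]
  let e : Fin s ≃ T' := (T'.equivFin.trans (finCongr hT'card)).symm
  have heX i : (e i : V) ∈ X := hTX (hT'T (e i).2)
  refine hSDK (nonempty_sdk_embedding u (fun i => e i) (fun i => w (e i))
    (fun i => hXu _ (heX i)) (fun i => (hwu _ (heX i)).2) (fun i => (hwu _ (heX i)).1)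
    (fun i j hadj => hT.isIndepSet (hT'T (e i).2) (hT'T (e j).2) hadj.ne hadj)
    (fun i j => (hwX _ (heX j) _ (heX i)).trans (Subtype.coe_inj.trans e.injective.eq_iff))
    (fun i j hadj => hJ.isIndepSet (mem_image_of_mem w (e i).2) (mem_image_of_mem w (e j).2)
      hadj.ne hadj))

lemma exists_card_le_forall_dist_eq_two [Fintype V] {s : ℕ} (hK4 : G.CliqueFree 4)
    (hSDK : IsFree (SDK s) G) (u : V) :
    ∃ S : Finset V, #S ≤ ramseyNumber 4 (ramseyNumber 4 s) ∧
      ∀ w, G.dist u w = 2 → ∃ x ∈ S, G.Adj x w := by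
  classical
  set 𝓕 := (G.neighborFinset u).powerset.filter
    fun X => ∀ w, G.dist u w = 2 → ∃ x ∈ X, G.Adj x w
  have hN𝓕 : G.neighborFinset u ∈ 𝓕 := by
    refine mem_filter.mpr ⟨mem_powerset_self _, fun w hw => ?_⟩
    obtain ⟨-, -, x, hx⟩ := dist_eq_two_iff.mp hw
    rw [mem_commonNeighbors] at hx
    exact ⟨x, (G.mem_neighborFinset u x).mpr hx.1, hx.2.symm⟩
  obtain ⟨X, hX𝓕, hXmin⟩ := 𝓕.exists_min_image card ⟨_, hN𝓕⟩
  obtain ⟨hXu, hXdom⟩ := mem_filter.mp hX𝓕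
  refine ⟨X, le_of_lt ?_, hXdom⟩
  have hpriv : ∀ x ∈ X, ∃ w, G.dist u w = 2 ∧ ∀ y ∈ X, G.Adj y w ↔ y = x := by
    intro x hx
    have : X.erase x ∉ 𝓕 := fun h => (hXmin _ h).not_gt (card_erase_lt_of_mem hx)
    simp only [𝓕, mem_filter, mem_powerset, (erase_subset x X).trans (mem_powerset.mp hXu),
      true_and, not_forall, mem_erase] at this
    obtain ⟨w, hw, hwx⟩ := this
    obtain ⟨y, hy, hyw⟩ := hXdom w hw
    have h_only_x : ∀ z ∈ X, G.Adj z w → z = x := fun z hz hzw =>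
      by_contra fun hzx => hwx ⟨z, ⟨hzx, hz⟩, hzw⟩
    obtain rfl := h_only_x y hy hyw
    exact ⟨w, hw, fun z hz => ⟨h_only_x z hz, fun hzy => hzy ▸ hyw⟩⟩
  choose! w hw using hpriv
  refine card_lt_of_forall_privateNeighbor hK4 hSDK
    (fun x hx => (G.mem_neighborFinset u x).mp (mem_powerset.mp hXu hx)) w
    (fun x hx => ?_) (fun x hx => (hw x hx).2)
  obtain ⟨hne, hnadj, -⟩ := dist_eq_two_iff.mp (hw x hx).1
  exact ⟨hne.symm, hnadj⟩

end PrivateNeighbors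

section Balls

variable {V : Type*} {G : SimpleGraph V} [DecidableEq V] {R : ℕ} (S : V → Finset V)

lemma card_union_biUnion_le {D : Finset V} (hS : ∀ u, #(S u) ≤ R) :
    #(D ∪ D.biUnion S) ≤ #D * (1 + R) := by
  calc #(D ∪ D.biUnion S) ≤ #D + #(D.biUnion S) := card_union_le _ _
    _ ≤ #D + #D * R := by gcongr; exact card_biUnion_le_card_mul _ _ _ fun u _ => hS u
    _ = #D * (1 + R) := by ring

lemma union_biUnion_dominates_dist_le_succ (hconn : G.Connected)
    (hS : ∀ u w, G.dist u w = 2 → ∃ x ∈ S u, G.Adj x w) {v : V} {D : Finset V} {n : ℕ}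
    (hD : ∀ w, G.dist v w ≤ n + 1 → w ∈ D ∨ ∃ d ∈ D, G.Adj w d) (w : V)
    (hw : G.dist v w ≤ n + 2) :
    w ∈ D ∪ D.biUnion S ∨ ∃ d ∈ D ∪ D.biUnion S, G.Adj w d := by
  simp only [mem_union, mem_biUnion]
  by_cases hw_le : G.dist v w ≤ n + 1
  · exact (hD w hw_le).imp Or.inl fun ⟨d, hd, hwd⟩ => ⟨d, Or.inl hd, hwd⟩
  have hw_eq : G.dist v w = n + 1 + 1 := by omega
  obtain ⟨w', hw'w, hvw'⟩ := exists_adj_dist_eq_of_dist_eq_succ hw_eq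
  rcases hD w' hvw'.le with hw'D | ⟨d, hdD, hw'd⟩
  · exact Or.inr ⟨w', Or.inl hw'D, hw'w.symm⟩
  have hdw : G.dist d w ≤ 2 := by
    have := hconn.dist_triangle (u := d) (v := w') (w := w)
    rwa [dist_eq_one_iff_adj.mpr hw'd.symm, dist_eq_one_iff_adj.mpr hw'w] at this
  interval_cases h : G.dist d w
  · exact Or.inl (Or.inl (hconn.dist_eq_zero_iff.mp h ▸ hdD))
  · exact Or.inr ⟨d, Or.inl hdD, (dist_eq_one_iff_adj.mp h).symm⟩
  · obtain ⟨x, hxS, hxw⟩ := hS d w h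
    exact Or.inr ⟨x, Or.inr ⟨d, hdD, hxS⟩, hxw.symm⟩

lemma exists_card_le_dominates_dist_le (hconn : G.Connected) (hS_card : ∀ u, #(S u) ≤ R)
    (hS : ∀ u w, G.dist u w = 2 → ∃ x ∈ S u, G.Adj x w) (v : V) :
    ∀ n : ℕ, ∃ D : Finset V, #D ≤ (1 + R) ^ n ∧
      ∀ w, G.dist v w ≤ n + 1 → w ∈ D ∨ ∃ d ∈ D, G.Adj w d
  | 0 => by
    refine ⟨{v}, by simp, fun w hw => ?_⟩
    rcases Nat.le_one_iff_eq_zero_or_eq_one.mp hw with h | h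
    · exact Or.inl (mem_singleton.mpr (hconn.dist_eq_zero_iff.mp h).symm)
    · exact Or.inr ⟨v, mem_singleton_self v, (dist_eq_one_iff_adj.mp h).symm⟩
  | n + 1 => by
    obtain ⟨D, hD_card, hD⟩ := exists_card_le_dominates_dist_le hconn hS_card hS v n
    refine ⟨D ∪ D.biUnion S, ?_, union_biUnion_dominates_dist_le_succ S hconn hS hD⟩
    calc #(D ∪ D.biUnion S) ≤ #D * (1 + R) := card_union_biUnion_le S hS_card
      _ ≤ (1 + R) ^ (n + 1) := by rw [pow_succ]; gcongr

end Balls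

end SimpleGraph

theorem stmt10_general (s t : ℕ)
    (V : Type) [Fintype V] (G : SimpleGraph V) (hconn : G.Connected)
    (hPt : IsFree (SimpleGraph.pathGraph t) G) (hSDK : IsFree (SDK s) G)
    (f : V → Fin 3) (hf : ∀ a b : V, G.Adj a b → f a ≠ f b) :
    ∃ D : Finset V, (∀ v : V, v ∉ D → ∃ d ∈ D, G.Adj v d) ∧
      D.card ≤ (1 + ramseyNumber 4 (ramseyNumber 4 s)) ^ (t - 2) := by
  classical
  have hK4 : G.CliqueFree 4 :=
    Colorable.cliqueFree ⟨Coloring.mk f fun h => hf _ _ h⟩ (by norm_num)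
  choose S hS_card hS using exists_card_le_forall_dist_eq_two hK4 hSDK
  obtain ⟨v⟩ := hconn.nonempty
  obtain ⟨D, hD_card, hD⟩ := exists_card_le_dominates_dist_le S hconn hS_card hS v (t - 2)
  refine ⟨D, fun w hw => (hD w ?_).resolve_left hw, hD_card⟩
  have := (hconn v w).dist_add_two_le_of_isFree_pathGraph hPt
  omega

theorem stmt10 (s t : ℕ) (hs : 1 ≤ s) (ht : 2 ≤ t)
    (V : Type) [Fintype V] (G : SimpleGraph V) (hconn : G.Connected)
    (hPt : IsFree (SimpleGraph.pathGraph t) G) (hSDK : IsFree (SDK s) G)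
    (f : V → Fin 3) (hf : ∀ a b : V, G.Adj a b → f a ≠ f b) :
    ∃ D : Finset V, (∀ v : V, v ∉ D → ∃ d ∈ D, G.Adj v d) ∧
      D.card ≤ (1 + ramseyNumber 4 (ramseyNumber 4 s)) ^ (t - 2) :=
  stmt10_general s t V G hconn hPt hSDK f hf
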